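/- For n ≤ 5: if T ∈ Z^×(C^{×(0)}∪C^{×(1)}) is invertible with reverse(T)·T central invertible, then T C^1 T^{-1} ⊆ C^1. I.e. Q ⊆ Γ (hence Q = Γ) in dimensions n ≤ 5. -/

import Mathlib

open CliffordAlgebra

noncomputable section

variable {n : ℕ} (Q : QuadraticForm ℝ (Fin n → ℝ))

/-- The standard generators `e_a` of the Clifford algebra. -/
def egen (a : Fin n) : CliffordAlgebra Q := ι Q (Pi.single a 1)

/-- The ordered product of generators indexed by a finite set. -/
def eProd (s : Finset (Fin n)) : CliffordAlgebra Q :=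
  ((s.sort (· ≤ ·)).map (egen Q)).prod

/-- The grade-`k` subspace `C^k`, spanned by the products of `k` distinct generators. -/
def gradeSubmodule (k : ℕ) : Submodule ℝ (CliffordAlgebra Q) :=
  Submodule.span ℝ {x | ∃ s : Finset (Fin n), s.card = k ∧ x = eProd Q s}

/-- The set `Z^× (C^{×(0)} ∪ C^{×(1)})` : invertible central elements times
invertible even or odd elements. -/
def Pset : Set (CliffordAlgebra Q) :=
  {T | ∃ W T₀ : CliffordAlgebra Q,
    W ∈ Subalgebra.center ℝ (CliffordAlgebra Q) ∧ IsUnit W ∧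
    (T₀ ∈ evenOdd Q 0 ∨ T₀ ∈ evenOdd Q 1) ∧ IsUnit T₀ ∧ T = W * T₀}

/-- `Q` is diagonal with entries `±1` in the standard basis (an orthonormal-type basis,
expressing nondegeneracy of `Q`). -/
def DiagQ : Prop :=
  (∀ a, Q (Pi.single a 1) = 1 ∨ Q (Pi.single a 1) = -1) ∧
  (∀ a b : Fin n, a ≠ b → QuadraticMap.polar Q (Pi.single a 1) (Pi.single b 1) = 0)

/-
The products `e_s` of the generators over subsets `s` span the Clifford algebra, and there are
`2 ^ n` of them, which is its dimension (`equivExterior`); so they form a basis. On `e_s` the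
grade involution acts by `(-1) ^ |s|` and the reversion by `(-1) ^ (|s| choose 2)`. For
`X = T e_a T⁻¹`, writing `T = W T₀` with `W` central and `T₀` homogeneous gives
`involute X = -X`, and centrality of `reverse T * T` gives `reverse X = X`. Hence every `e_s`
occurring in `X` has `|s| ≡ 1 mod 4`, i.e. `|s| ∈ {1, 5}` when `n ≤ 5`. For `n = 5` the
`e_{1…5}`-coordinate of `X` is, up to the factor `∏ Q(e_a) ≠ 0`, the scalar part
(`∅`-coordinate) of `reverse(e_{1…5}) X`; as `e_{1…5}` is central in odd dimension and the
scalar part is a trace, this equals the scalar part of `reverse(e_{1…5}) e_a`, which is `0`.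
-/

open scoped symmDiff

lemma Nat.mod_four_eq_one_of_odd_of_even_choose_two {m : ℕ} (hm : Odd m)
    (h : Even (m.choose 2)) : m % 4 = 1 := by
  obtain ⟨k, rfl⟩ := hm
  have hchoose : (2 * k + 1).choose 2 = (2 * k + 1) * k := by
    rw [Nat.choose_two_right, Nat.add_sub_cancel, mul_left_comm, Nat.mul_div_cancel_left _ two_pos]
  rw [hchoose, Nat.even_mul] at h
  rcases h with h | ⟨j, rfl⟩
  · exact absurd h (by simp)
  · omega

lemma Finset.sort_insert_perm {α : Type*} [LinearOrder α] {a : α} {s : Finset α}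
    (ha : a ∉ s) :
    ((insert a s).sort (· ≤ ·)).Perm (a :: s.sort (· ≤ ·)) :=
  ((Finset.sort_perm_toList _ _).trans (Finset.toList_insert ha)).trans
    ((Finset.sort_perm_toList _ _).symm.cons a)

variable {Q}

lemma reverse_conj {R M : Type*} [CommRing R] [AddCommGroup M] [Module R M]
    {Q : QuadraticForm R M} (T : (CliffordAlgebra Q)ˣ)
    (hc : reverse (T : CliffordAlgebra Q) * T ∈ Subalgebra.center R (CliffordAlgebra Q))
    (x : CliffordAlgebra Q) :
    reverse (Q := Q) (↑T * x * ↑T⁻¹) = ↑T * reverse x * ↑T⁻¹ := by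
  have hinv : reverse (↑T⁻¹ : CliffordAlgebra Q) * reverse ↑T = 1 := by
    rw [← reverse.map_mul, Units.mul_inv, reverse.map_one]
  have hx := Subalgebra.mem_center_iff.mp hc (reverse x)
  calc reverse (Q := Q) (↑T * x * ↑T⁻¹)
      = reverse (Q := Q) ↑T⁻¹ * (reverse x * (reverse ↑T * ↑T)) * ↑T⁻¹ := by
        simp [mul_assoc]
    _ = ↑T * reverse x * ↑T⁻¹ := by
        rw [hx, ← mul_assoc, ← mul_assoc, hinv, one_mul, mul_assoc]

lemma involute_conj (T : (CliffordAlgebra Q)ˣ) (hT : (T : CliffordAlgebra Q) ∈ Pset Q)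
    (x : CliffordAlgebra Q) :
    involute (Q := Q) (↑T * x * ↑T⁻¹) = ↑T * involute x * ↑T⁻¹ := by
  obtain ⟨W, T₀, hW, hWu, hpar, hT₀u, hTW⟩ := hT
  have hconj (y : CliffordAlgebra Q) : ↑T * y * ↑T⁻¹ * T₀ = T₀ * y := by
    refine hWu.mul_left_cancel ?_
    calc W * ((T : CliffordAlgebra Q) * y * ↑T⁻¹ * T₀)
        = (T : CliffordAlgebra Q) * y * ↑T⁻¹ * (W * T₀) := by
          rw [← mul_assoc, ← Subalgebra.mem_center_iff.mp hW, mul_assoc]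
      _ = W * (T₀ * y) := by rw [← hTW, mul_assoc, Units.inv_mul, mul_one, hTW, mul_assoc]
  have hinv :
      involute (Q := Q) (↑T * x * ↑T⁻¹) * involute T₀ = involute T₀ * involute x := by
    rw [← map_mul, hconj, map_mul]
  refine hT₀u.mul_left_inj.mp ?_
  rw [hconj]
  rcases hpar with h | h
  · rwa [involute_eq_of_mem_even h] at hinv
  · rwa [involute_eq_of_mem_odd h, mul_neg, neg_mul, neg_inj] at hinv

variable (Q) in
def eListProd (l : List (Fin n)) : CliffordAlgebra Q := (l.map (egen Q)).prod

@[simp] lemma eListProd_nil : eListProd Q ([] : List (Fin n)) = 1 := rfl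

@[simp] lemma eListProd_cons (a : Fin n) (l : List (Fin n)) :
    eListProd Q (a :: l) = egen Q a * eListProd Q l := List.prod_cons

@[simp] lemma eListProd_append (l l' : List (Fin n)) :
    eListProd Q (l ++ l') = eListProd Q l * eListProd Q l' := by
  simp [eListProd]

lemma eProd_eq_eListProd (s : Finset (Fin n)) : eProd Q s = eListProd Q (s.sort (· ≤ ·)) := rfl

@[simp] lemma eProd_empty : eProd Q (∅ : Finset (Fin n)) = 1 := by
  simp [eProd_eq_eListProd]

@[simp] lemma eProd_singleton (a : Fin n) : eProd Q {a} = egen Q a := by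
  simp [eProd_eq_eListProd]

lemma ι_eq_sum_egen (v : Fin n → ℝ) : ι Q v = ∑ a, v a • egen Q a := by
  conv_lhs => rw [← (Pi.basisFun ℝ (Fin n)).sum_repr v]
  simp [egen]

lemma reverse_eListProd (l : List (Fin n)) :
    reverse (eListProd Q l) = eListProd Q l.reverse := by
  induction l with
  | nil => simp
  | cons a l ih => simp [ih, egen, reverse_ι]

lemma involute_eListProd (l : List (Fin n)) :
    involute (eListProd Q l) = (-1 : ℝ) ^ l.length • eListProd Q l := by
  induction l with
  | nil => simp
  | cons a l ih => simp [ih, egen, pow_succ']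

lemma involute_eProd (s : Finset (Fin n)) :
    involute (eProd Q s) = (-1 : ℝ) ^ s.card • eProd Q s := by
  rw [eProd_eq_eListProd, involute_eListProd, Finset.length_sort]

lemma reverse_eListProd_mul_self (l : List (Fin n)) :
    reverse (eListProd Q l) * eListProd Q l =
      algebraMap ℝ _ (l.map fun a => Q (Pi.single a 1)).prod := by
  induction l with
  | nil => simp
  | cons a l ih =>
    rw [reverse_eListProd] at ih ⊢
    calc eListProd Q (a :: l).reverse * eListProd Q (a :: l)
        = eListProd Q l.reverse * (egen Q a * egen Q a) * eListProd Q l := by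
          simp [mul_assoc]
      _ = _ := by
          rw [egen, ι_sq_scalar, ← Algebra.commutes, mul_assoc, ih, List.map_cons,
            List.prod_cons, map_mul]

lemma reverse_eProd_mul_self (s : Finset (Fin n)) :
    reverse (eProd Q s) * eProd Q s = algebraMap ℝ _ (∏ a ∈ s, Q (Pi.single a 1)) := by
  rw [eProd_eq_eListProd, reverse_eListProd_mul_self, Finset.prod_eq_multiset_prod,
    ← Finset.sort_eq s (· ≤ ·), Multiset.map_coe, Multiset.prod_coe]

lemma finrank_cliffordAlgebra :
    Module.finrank ℝ (CliffordAlgebra Q) = Fintype.card (Finset (Fin n)) :=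
  (equivExterior Q).finrank_eq.trans
    (Module.finrank_eq_card_basis (Pi.basisFun ℝ (Fin n)).ExteriorAlgebra)

section Orthogonal

variable (hQ : Pairwise fun a b : Fin n => Q.IsOrtho (Pi.single a 1) (Pi.single b 1))
include hQ

lemma egen_mul_egen_of_ne {a b : Fin n} (h : a ≠ b) :
    egen Q a * egen Q b = -(egen Q b * egen Q a) :=
  eq_neg_of_add_eq_zero_left (ι_mul_ι_add_swap_of_isOrtho (hQ h))

lemma egen_mul_eListProd (a : Fin n) (l : List (Fin n)) :
    egen Q a * eListProd Q l =
      (-1 : ℝ) ^ (l.length - l.count a) • (eListProd Q l * egen Q a) := by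
  induction l with
  | nil => simp
  | cons b l ih =>
    rw [eListProd_cons]
    by_cases hb : b = a
    · subst hb
      conv_lhs => rw [ih, mul_smul_comm, ← mul_assoc]
      rw [List.count_cons_self, List.length_cons, Nat.add_sub_add_right]
    · rw [← mul_assoc, egen_mul_egen_of_ne hQ (Ne.symm hb), neg_mul, mul_assoc, ih,
        mul_smul_comm, ← mul_assoc, List.count_cons_of_ne hb, List.length_cons,
        Nat.sub_add_comm List.count_le_length, pow_succ, mul_neg_one, neg_smul]

lemma eListProd_mul_egen_of_notMem {a : Fin n} {l : List (Fin n)} (ha : a ∉ l) :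
    eListProd Q l * egen Q a = (-1 : ℝ) ^ l.length • (egen Q a * eListProd Q l) := by
  rw [egen_mul_eListProd hQ, List.count_eq_zero.mpr ha, Nat.sub_zero, smul_smul, ← pow_add,
    ← two_mul, pow_mul, neg_one_sq, one_pow, one_smul]

lemma eListProd_reverse {l : List (Fin n)} (hl : l.Nodup) :
    eListProd Q l.reverse = (-1 : ℝ) ^ l.length.choose 2 • eListProd Q l := by
  induction l with
  | nil => simp
  | cons a l ih =>
    obtain ⟨ha, hl⟩ := List.nodup_cons.mp hl
    rw [List.reverse_cons, eListProd_append, ih hl, smul_mul_assoc, eListProd_cons,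
      eListProd_nil, mul_one, eListProd_mul_egen_of_notMem hQ ha, smul_smul, ← pow_add,
      List.length_cons, Nat.choose_succ_succ, Nat.choose_one_right, add_comm, eListProd_cons]

lemma reverse_eProd (s : Finset (Fin n)) :
    reverse (eProd Q s) = (-1 : ℝ) ^ s.card.choose 2 • eProd Q s := by
  rw [eProd_eq_eListProd, reverse_eListProd, eListProd_reverse hQ (Finset.sort_nodup _ _),
    Finset.length_sort]

lemma eListProd_perm {l l' : List (Fin n)} (h : l.Perm l') (hl : l.Nodup) :
    ∃ c : ℝ, eListProd Q l = c • eListProd Q l' := by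
  induction h with
  | nil => exact ⟨1, by simp⟩
  | cons a _ ih =>
    obtain ⟨c, hc⟩ := ih (List.nodup_cons.mp hl).2
    exact ⟨c, by rw [eListProd_cons, hc, mul_smul_comm, eListProd_cons]⟩
  | swap a b l =>
    have hab : b ≠ a := by rintro rfl; simp at hl
    refine ⟨-1, ?_⟩
    simp only [eListProd_cons, ← mul_assoc, egen_mul_egen_of_ne hQ hab]
    simp
  | trans h₁ _ ih₁ ih₂ =>
    obtain ⟨c, hc⟩ := ih₁ hl
    obtain ⟨c', hc'⟩ := ih₂ (h₁.nodup_iff.mp hl)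
    exact ⟨c * c', by rw [hc, hc', smul_smul]⟩

lemma egen_mul_eProd_of_notMem {a : Fin n} {s : Finset (Fin n)} (ha : a ∉ s) :
    ∃ c : ℝ, egen Q a * eProd Q s = c • eProd Q (insert a s) := by
  have hnd : (a :: s.sort (· ≤ ·)).Nodup :=
    (Finset.sort_insert_perm ha).nodup_iff.mp (Finset.sort_nodup _ _)
  simpa [eProd_eq_eListProd] using eListProd_perm hQ (Finset.sort_insert_perm ha).symm hnd

lemma eProd_insert {a : Fin n} {s : Finset (Fin n)} (ha : a ∉ s) :
    ∃ c : ℝ, eProd Q (insert a s) = c • (egen Q a * eProd Q s) := by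
  simpa [eProd_eq_eListProd] using
    eListProd_perm hQ (Finset.sort_insert_perm ha) (Finset.sort_nodup _ _)

lemma egen_mul_eProd (a : Fin n) (s : Finset (Fin n)) :
    ∃ c : ℝ, egen Q a * eProd Q s = c • eProd Q ({a} ∆ s) := by
  by_cases ha : a ∈ s
  · have hs : {a} ∆ s = s.erase a := by
      ext b; by_cases hb : b = a <;> simp [Finset.mem_symmDiff, hb, ha]
    obtain ⟨c, hc⟩ := eProd_insert hQ (Finset.notMem_erase a s)
    rw [Finset.insert_erase ha] at hc
    refine ⟨c * Q (Pi.single a 1), ?_⟩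
    rw [hc, hs, mul_smul_comm, ← mul_assoc, egen, ι_sq_scalar, ← Algebra.smul_def, smul_smul]
  · have hs : {a} ∆ s = insert a s := by
      ext b; by_cases hb : b = a <;> simp [Finset.mem_symmDiff, hb, ha]
    rw [hs]
    exact egen_mul_eProd_of_notMem hQ ha

lemma eProd_mul_eProd (s t : Finset (Fin n)) :
    ∃ c : ℝ, eProd Q s * eProd Q t = c • eProd Q (s ∆ t) := by
  induction s using Finset.induction_on with
  | empty =>
    exact ⟨1, by rw [eProd_empty, one_mul, one_smul, ← Finset.bot_eq_empty, bot_symmDiff]⟩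
  | insert a s ha ih =>
    obtain ⟨c₁, h₁⟩ := eProd_insert hQ ha
    obtain ⟨c₂, h₂⟩ := ih
    obtain ⟨c₃, h₃⟩ := egen_mul_eProd hQ a (s ∆ t)
    have hst : {a} ∆ (s ∆ t) = insert a s ∆ t := by
      rw [← symmDiff_assoc, (Finset.disjoint_singleton_left.mpr ha).symmDiff_eq_sup,
        Finset.sup_eq_union, ← Finset.insert_eq]
    refine ⟨c₁ * c₂ * c₃, ?_⟩
    rw [h₁, smul_mul_assoc, mul_assoc, h₂, mul_smul_comm, h₃, hst, smul_smul, smul_smul]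

lemma eProd_univ_mem_center (hodd : Odd n) :
    eProd Q Finset.univ ∈ Subalgebra.center ℝ (CliffordAlgebra Q) := by
  have hgen (a : Fin n) : egen Q a * eProd Q Finset.univ = eProd Q Finset.univ * egen Q a := by
    have hcount : (Finset.univ.sort (· ≤ ·)).count a = 1 :=
      List.count_eq_one_of_mem (Finset.sort_nodup _ _) (by simp)
    rw [eProd_eq_eListProd, egen_mul_eListProd hQ, hcount, Finset.length_sort, Finset.card_univ,
      Fintype.card_fin, (Nat.Odd.sub_odd hodd odd_one).neg_one_pow, one_smul]
  rw [Subalgebra.mem_center_iff]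
  intro x
  induction x using CliffordAlgebra.induction with
  | algebraMap r => exact Algebra.commutes r _
  | ι v =>
    simp only [ι_eq_sum_egen, Finset.sum_mul, Finset.mul_sum, smul_mul_assoc, mul_smul_comm, hgen]
  | mul x y hx hy => rw [mul_assoc, hy, ← mul_assoc, hx, mul_assoc]
  | add x y hx hy => rw [add_mul, mul_add, hx, hy]

lemma span_range_eProd : Submodule.span ℝ (Set.range (eProd Q)) = ⊤ := by
  set S := Submodule.span ℝ (Set.range (eProd Q))
  have hmul (a : Fin n) : S ≤ S.comap (LinearMap.mulLeft ℝ (egen Q a)) := by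
    refine Submodule.span_le.mpr ?_
    rintro _ ⟨s, rfl⟩
    obtain ⟨c, hc⟩ := egen_mul_eProd hQ a s
    simpa [hc] using S.smul_mem c (Submodule.subset_span ⟨_, rfl⟩)
  refine Submodule.eq_top_iff'.mpr fun x => ?_
  induction x using CliffordAlgebra.left_induction with
  | algebraMap r =>
    simpa [Algebra.algebraMap_eq_smul_one] using
      S.smul_mem r (Submodule.subset_span ⟨∅, eProd_empty⟩)
  | add x y hx hy => exact S.add_mem hx hy
  | ι_mul x v hx =>
    rw [ι_eq_sum_egen, Finset.sum_mul]
    exact S.sum_mem fun a _ => by rw [smul_mul_assoc]; exact S.smul_mem _ (hmul a hx)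

def eBasis : Module.Basis (Finset (Fin n)) ℝ (CliffordAlgebra Q) :=
  basisOfTopLeSpanOfCardEqFinrank (eProd Q) (span_range_eProd hQ).ge finrank_cliffordAlgebra.symm

@[simp] lemma eBasis_apply (s : Finset (Fin n)) : eBasis hQ s = eProd Q s := by
  simp [eBasis]

@[simp] lemma eBasis_repr_eProd (t : Finset (Fin n)) :
    (eBasis hQ).repr (eProd Q t) = Finsupp.single t 1 := by
  rw [← eBasis_apply hQ, Module.Basis.repr_self]

lemma eBasis_coord_map_of_map_eProd (f : CliffordAlgebra Q →ₗ[ℝ] CliffordAlgebra Q)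
    (ε : Finset (Fin n) → ℝ) (hf : ∀ t, f (eProd Q t) = ε t • eProd Q t)
    (s : Finset (Fin n)) (x : CliffordAlgebra Q) :
    (eBasis hQ).coord s (f x) = ε s * (eBasis hQ).coord s x := by
  have h : (eBasis hQ).coord s ∘ₗ f = ε s • (eBasis hQ).coord s := by
    refine (eBasis hQ).ext fun t => ?_
    by_cases hts : t = s <;> simp [hf, hts]
  exact LinearMap.congr_fun h x

lemma eBasis_coord_involute (s : Finset (Fin n)) (x : CliffordAlgebra Q) :
    (eBasis hQ).coord s (involute x) = (-1 : ℝ) ^ s.card * (eBasis hQ).coord s x :=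
  eBasis_coord_map_of_map_eProd hQ involute.toLinearMap _ involute_eProd s x

lemma eBasis_coord_reverse (s : Finset (Fin n)) (x : CliffordAlgebra Q) :
    (eBasis hQ).coord s (reverse x) = (-1 : ℝ) ^ s.card.choose 2 * (eBasis hQ).coord s x :=
  eBasis_coord_map_of_map_eProd hQ reverse _ (reverse_eProd hQ) s x

lemma eBasis_coord_empty_eProd_mul_eProd_of_ne {s t : Finset (Fin n)} (h : s ≠ t) :
    (eBasis hQ).coord ∅ (eProd Q s * eProd Q t) = 0 := by
  obtain ⟨c, hc⟩ := eProd_mul_eProd hQ s t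
  have hne : s ∆ t ≠ ∅ := fun h' => h (symmDiff_eq_bot.mp h')
  rw [hc, map_smul, Module.Basis.coord_apply, eBasis_repr_eProd, Finsupp.single_eq_of_ne' hne,
    smul_zero]

lemma eBasis_coord_empty_mul_comm (x y : CliffordAlgebra Q) :
    (eBasis hQ).coord ∅ (x * y) = (eBasis hQ).coord ∅ (y * x) := by
  have h : (LinearMap.mul ℝ _).compr₂ ((eBasis hQ).coord ∅) =
      ((LinearMap.mul ℝ _).compr₂ ((eBasis hQ).coord ∅)).flip := by
    refine LinearMap.ext_basis (eBasis hQ) (eBasis hQ) fun s t => ?_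
    by_cases hst : s = t
    · simp [hst]
    · simp [eBasis_coord_empty_eProd_mul_eProd_of_ne hQ hst,
        eBasis_coord_empty_eProd_mul_eProd_of_ne hQ (Ne.symm hst)]
  exact LinearMap.congr_fun₂ h x y

lemma eBasis_coord_empty_conj (T : (CliffordAlgebra Q)ˣ) (x : CliffordAlgebra Q) :
    (eBasis hQ).coord ∅ (↑T * x * ↑T⁻¹) = (eBasis hQ).coord ∅ x := by
  rw [mul_assoc, eBasis_coord_empty_mul_comm hQ, mul_assoc, Units.inv_mul, mul_one]

lemma eBasis_coord_empty_reverse_eProd_mul (s : Finset (Fin n)) (x : CliffordAlgebra Q) :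
    (eBasis hQ).coord ∅ (reverse (eProd Q s) * x) =
      (∏ a ∈ s, Q (Pi.single a 1)) * (eBasis hQ).coord s x := by
  have h : (eBasis hQ).coord ∅ ∘ₗ LinearMap.mulLeft ℝ (reverse (eProd Q s)) =
      (∏ a ∈ s, Q (Pi.single a 1)) • (eBasis hQ).coord s := by
    refine (eBasis hQ).ext fun t => ?_
    by_cases hts : t = s
    · subst hts
      simp [reverse_eProd_mul_self, Algebra.algebraMap_eq_smul_one, ← eProd_empty]
    · simp [reverse_eProd hQ, eBasis_coord_empty_eProd_mul_eProd_of_ne hQ (Ne.symm hts), hts]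
  exact LinearMap.congr_fun h x

lemma mem_gradeSubmodule_of_eBasis_coord {k : ℕ} {x : CliffordAlgebra Q}
    (h : ∀ s, (eBasis hQ).coord s x ≠ 0 → s.card = k) : x ∈ gradeSubmodule Q k := by
  have hspan : gradeSubmodule Q k = Submodule.span ℝ (eBasis hQ '' {s | s.card = k}) := by
    simp only [gradeSubmodule, eBasis_apply]
    congr 1
    ext y
    simp [eq_comm]
  rw [hspan, Module.Basis.mem_span_image]
  intro s hs
  exact h s (Finsupp.mem_support_iff.mp hs)

lemma eBasis_coord_univ_conj (hQ₀ : ∀ a, Q (Pi.single a 1) ≠ 0) (hodd : Odd n)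
    (T : (CliffordAlgebra Q)ˣ) (x : CliffordAlgebra Q) :
    (eBasis hQ).coord Finset.univ (↑T * x * ↑T⁻¹) = (eBasis hQ).coord Finset.univ x := by
  have hE : reverse (eProd Q Finset.univ) ∈ Subalgebra.center ℝ (CliffordAlgebra Q) := by
    rw [reverse_eProd hQ]
    exact Subalgebra.smul_mem _ (eProd_univ_mem_center hQ hodd) _
  have hP : ∏ a ∈ Finset.univ, Q (Pi.single a 1) ≠ 0 :=
    Finset.prod_ne_zero_iff.mpr fun a _ => hQ₀ a
  refine mul_left_cancel₀ hP ?_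
  have hcomm : reverse (eProd Q Finset.univ) * ((T : CliffordAlgebra Q) * x * ↑T⁻¹) =
      ↑T * (reverse (eProd Q Finset.univ) * x) * ↑T⁻¹ := by
    rw [← mul_assoc, ← mul_assoc, ← Subalgebra.mem_center_iff.mp hE ↑T, mul_assoc _ _ x]
  rw [← eBasis_coord_empty_reverse_eProd_mul, ← eBasis_coord_empty_reverse_eProd_mul, hcomm,
    eBasis_coord_empty_conj]

end Orthogonal

lemma DiagQ.pairwise_isOrtho (hQ : DiagQ Q) :
    Pairwise fun a b : Fin n => Q.IsOrtho (Pi.single a 1) (Pi.single b 1) :=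
  fun a b h => QuadraticMap.isOrtho_polarBilin.mp (by simpa using hQ.2 a b h)

lemma DiagQ.ne_zero (hQ : DiagQ Q) (a : Fin n) : Q (Pi.single a 1) ≠ 0 := by
  rcases hQ.1 a with h | h <;> norm_num [h]

lemma conj_egen_mem_gradeSubmodule_one (hQ : DiagQ Q) (hn : n ≤ 5) (T : (CliffordAlgebra Q)ˣ)
    (hT : (T : CliffordAlgebra Q) ∈ Pset Q)
    (hc : reverse (T : CliffordAlgebra Q) * T ∈ Subalgebra.center ℝ (CliffordAlgebra Q))
    (a : Fin n) : (T : CliffordAlgebra Q) * egen Q a * ↑T⁻¹ ∈ gradeSubmodule Q 1 := by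
  have hQ' := hQ.pairwise_isOrtho
  refine mem_gradeSubmodule_of_eBasis_coord hQ' fun s hs => ?_
  have hinvolute : (-1 : ℝ) ^ s.card = -1 := mul_right_cancel₀ hs <| by
    rw [← eBasis_coord_involute, involute_conj T hT, egen, involute_ι, mul_neg, neg_mul, map_neg,
      neg_one_mul]
  have hreverse : (-1 : ℝ) ^ s.card.choose 2 = 1 := mul_right_cancel₀ hs <| by
    rw [← eBasis_coord_reverse, reverse_conj T hc, egen, reverse_ι, one_mul]
  have hmod := Nat.mod_four_eq_one_of_odd_of_even_choose_two
    ((neg_one_pow_eq_neg_one_iff_odd (by norm_num)).mp hinvolute)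
    ((neg_one_pow_eq_one_iff_even (by norm_num)).mp hreverse)
  have hcard : s.card ≤ n := by simpa using s.card_le_univ
  by_contra hs1
  have hn5 : s.card = 5 ∧ n = 5 := by omega
  have hsu : s = Finset.univ := Finset.eq_univ_of_card s (by simp [hn5.1, hn5.2])
  subst hsu
  refine hs ?_
  rw [eBasis_coord_univ_conj hQ' hQ.ne_zero ⟨2, hn5.2⟩ T, ← eProd_singleton,
    Module.Basis.coord_apply, eBasis_repr_eProd, Finsupp.single_eq_of_ne']
  intro h
  simpa [← h] using hn5.1

/-- `Q ⊆ Γ` for `n ≤ 5`: if `T ∈ Z^×(C^{×(0)} ∪ C^{×(1)})` and `reverse(T) * T` is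
an invertible central element, then conjugation by `T` preserves `C^1`. -/
theorem stmt16 (hQ : DiagQ Q) (hn : n ≤ 5) (T : (CliffordAlgebra Q)ˣ)
    (hT : (↑T : CliffordAlgebra Q) ∈ Pset Q)
    (hc : reverse (Q := Q) (↑T : CliffordAlgebra Q) * ↑T ∈
      Subalgebra.center ℝ (CliffordAlgebra Q)) :
    ∀ U ∈ gradeSubmodule Q 1,
      (↑T : CliffordAlgebra Q) * U * (↑T⁻¹ : CliffordAlgebra Q) ∈ gradeSubmodule Q 1 := by
  intro U hU
  refine (Submodule.span_le (p := (gradeSubmodule Q 1).comap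
    (LinearMap.mulLeftRight ℝ ((T : CliffordAlgebra Q), ↑T⁻¹)))).mpr ?_ hU
  rintro _ ⟨s, hs, rfl⟩
  obtain ⟨a, rfl⟩ := Finset.card_eq_one.mp hs
  simpa using conj_egen_mem_gradeSubmodule_one hQ hn T hT hc a
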